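/- (Iterated simulation.) Let M be a PTIME TM with tape alphabet Γ and input alphabet Σ, together with an encoding as in the simulation setup. Then there exists a term SIMULATE of ForNo such that: for every state σ, configuration c, halting configuration c_HALT and natural number p with σ ≈ c and c ⇝ᵖ c_HALT, and for every k ≥ p, the k-fold sequential composition SIMULATE;…;SIMULATE satisfies ⟨SIMULATE;…;SIMULATE, σ⟩ ⇓ τ for some τ with τ ≈ c_HALT. -/

import Mathlib

set_option linter.unusedVariables false

namespace ForNo

/-- Registers. -/
abbrev Reg := ℕ
/-- Stacks of natural numbers; the head is the top. -/
abbrev Stack := List ℕ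
/-- Stores map registers to stacks. -/
abbrev Store := Reg → Stack
/-- A state is a store together with an error counter. -/
abbrev FState := Store × ℕ

/-- The store mapping every register to the empty stack. -/
def emptyStore : Store := fun _ => []

/-- Store update. -/
def upd (φ : Store) (x : Reg) (s : Stack) : Store := fun y => if y = x then s else φ y

/-- Counter-guarded push operation. -/
def pushOp (n : ℕ) : Stack × ℕ → Stack × ℕ
  | (s, 0) => (n :: s, 0)
  | (s, c + 1) => if s.head? = some n then (s, c + 1) else (s, c)

/-- Counter-guarded pop operation. -/
def popOp (n : ℕ) : Stack × ℕ → Stack × ℕ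
  | (s, c) =>
      if s.head? = some n then
        match c with
        | 0 => (s.tail, 0)
        | c + 1 => (s, c + 1)
      else (s, c + 1)

mutual
  /-- Terms of the (raw) language. -/
  inductive Term : Type where
    | skip : Term
    | push : ℕ → Reg → Term
    | pop : ℕ → Reg → Term
    | seq : Term → Term → Term
    | ifeq : Reg → ℕ → Term → Term
    | normal : List Reg → Term → Term
    | fort : Reg → Bodies → Term
    | roft : Reg → Bodies → Term
  /-- Nonempty lists of iteration bodies. -/
  inductive Bodies : Type where
    | single : Term → Bodies
    | cons : Term → Bodies → Bodies
end

/-- `ps.get i` is `P_min(i,m)` where `ps = P₀ … P_m`. -/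
def Bodies.get : Bodies → ℕ → Term
  | .single t, _ => t
  | .cons t _, 0 => t
  | .cons _ ps, i + 1 => ps.get i

mutual
  /-- Big-step operational semantics `⟨T, ω⟩ ⇓ ω'`. -/
  inductive Eval : Term → FState → FState → Prop where
    | skip : ∀ ω, Eval .skip ω ω
    | seq : ∀ {t u : Term} {ω ω' ω'' : FState},
        Eval t ω ω' → Eval u ω' ω'' → Eval (.seq t u) ω ω''
    | push : ∀ (n : ℕ) (x : Reg) (φ : Store) (c : ℕ),
        Eval (.push n x) (φ, c) (upd φ x (pushOp n (φ x, c)).1, (pushOp n (φ x, c)).2)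
    | pop : ∀ (n : ℕ) (x : Reg) (φ : Store) (c : ℕ),
        Eval (.pop n x) (φ, c) (upd φ x (popOp n (φ x, c)).1, (popOp n (φ x, c)).2)
    | ifeq_true : ∀ {x n t} {φ : Store} {c : ℕ} {ω' : FState},
        (φ x).head? = some n → Eval t (φ, c) ω' → Eval (.ifeq x n t) (φ, c) ω'
    | ifeq_false : ∀ {x n t} (φ : Store) (c : ℕ),
        (φ x).head? ≠ some n → Eval (.ifeq x n t) (φ, c) (φ, c)
    | normal : ∀ {xs t ω ω'}, Eval t ω ω' → Eval (.normal xs t) ω ω'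
    | fort : ∀ {x ps ω ω'}, EvalList (ω.1 x) ps ω ω' → Eval (.fort x ps) ω ω'
    | roft : ∀ {x ps ω ω'}, EvalList (ω.1 x).reverse ps ω ω' → Eval (.roft x ps) ω ω'
  /-- Iteration judgment `⟦s, ps, ω⟧ ⇓ ω'`. -/
  inductive EvalList : Stack → Bodies → FState → FState → Prop where
    | nil : ∀ (ps : Bodies) (ω : FState), EvalList [] ps ω ω
    | cons : ∀ {i : ℕ} {t : Stack} {ps : Bodies} {ω ω'' ω' : FState},
        Eval (ps.get i) ω ω'' → EvalList t ps ω'' ω' → EvalList (i :: t) ps ω ω'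
end

mutual
  /-- The inversion map `−(·)` on terms. -/
  def Term.inv : Term → Term
    | .skip => .skip
    | .push n x => .pop n x
    | .pop n x => .push n x
    | .seq t u => .seq u.inv t.inv
    | .ifeq x n t => .ifeq x n t.inv
    | .normal xs t => .normal xs t.inv
    | .fort x ps => .roft x ps.inv
    | .roft x ps => .fort x ps.inv
  def Bodies.inv : Bodies → Bodies
    | .single t => .single t.inv
    | .cons t ps => .cons t.inv ps.inv
end

mutual
  /-- `t.Writes y` holds iff some `PUSH`/`POP` occurring in `t` writes register `y`. -/
  def Term.Writes : Term → Reg → Prop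
    | .skip, _ => False
    | .push _ x, y => x = y
    | .pop _ x, y => x = y
    | .seq t u, y => t.Writes y ∨ u.Writes y
    | .ifeq _ _ t, y => t.Writes y
    | .normal _ t, y => t.Writes y
    | .fort _ ps, y => ps.Writes y
    | .roft _ ps, y => ps.Writes y
  def Bodies.Writes : Bodies → Reg → Prop
    | .single t, y => t.Writes y
    | .cons t ps, y => t.Writes y ∨ ps.Writes y
end

mutual
  /-- `t.Leads y` holds iff `y` leads some `FOR`/`ROF` iteration occurring in `t`. -/
  def Term.Leads : Term → Reg → Prop
    | .skip, _ => False
    | .push _ _, _ => False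
    | .pop _ _, _ => False
    | .seq t u, y => t.Leads y ∨ u.Leads y
    | .ifeq _ _ t, y => t.Leads y
    | .normal _ t, y => t.Leads y
    | .fort x ps, y => x = y ∨ ps.Leads y
    | .roft x ps, y => x = y ∨ ps.Leads y
  def Bodies.Leads : Bodies → Reg → Prop
    | .single t, y => t.Leads y
    | .cons t ps, y => t.Leads y ∨ ps.Leads y
end

mutual
  /-- `t.Mentions y` holds iff register `y` occurs in `t`. -/
  def Term.Mentions : Term → Reg → Prop
    | .skip, _ => False
    | .push _ x, y => x = y
    | .pop _ x, y => x = y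
    | .seq t u, y => t.Mentions y ∨ u.Mentions y
    | .ifeq x _ t, y => x = y ∨ t.Mentions y
    | .normal xs t, y => y ∈ xs ∨ t.Mentions y
    | .fort x ps, y => x = y ∨ ps.Mentions y
    | .roft x ps, y => x = y ∨ ps.Mentions y
  def Bodies.Mentions : Bodies → Reg → Prop
    | .single t, y => t.Mentions y
    | .cons t ps, y => t.Mentions y ∨ ps.Mentions y
end

mutual
  /-- The finite set of registers occurring in a term. -/
  def Term.regs : Term → Finset Reg
    | .skip => ∅
    | .push _ x => {x}
    | .pop _ x => {x}
    | .seq t u => t.regs ∪ u.regs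
    | .ifeq x _ t => insert x t.regs
    | .normal xs t => xs.toFinset ∪ t.regs
    | .fort x ps => insert x ps.regs
    | .roft x ps => insert x ps.regs
  def Bodies.regs : Bodies → Finset Reg
    | .single t => t.regs
    | .cons t ps => t.regs ∪ ps.regs
end

mutual
  /-- Safe terms: generated by the grammar `S` (no `NORMAL`). -/
  def Term.Safe : Term → Prop
    | .skip => True
    | .push _ _ => True
    | .pop _ _ => True
    | .seq t u => t.Safe ∧ u.Safe
    | .ifeq _ _ t => t.Safe
    | .normal _ _ => False
    | .fort _ ps => ps.Safe
    | .roft _ ps => ps.Safe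
  def Bodies.Safe : Bodies → Prop
    | .single t => t.Safe
    | .cons t ps => t.Safe ∧ ps.Safe
end

/-- Raw terms: generated by the grammar `T` (iterations only inside `NORMAL` bodies,
which must be safe). -/
def Term.Raw : Term → Prop
  | .skip => True
  | .push _ _ => True
  | .pop _ _ => True
  | .seq t u => t.Raw ∧ u.Raw
  | .ifeq _ _ t => t.Raw
  | .normal _ t => t.Safe
  | .fort _ _ => False
  | .roft _ _ => False

mutual
  /-- The read-only constraints (i) and (ii) defining membership in ForNo. -/
  def Term.WF : Term → Prop
    | .skip => True
    | .push _ _ => True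
    | .pop _ _ => True
    | .seq t u => t.WF ∧ u.WF
    | .ifeq x _ t => t.WF ∧ ¬ t.Writes x
    | .normal xs t => t.WF ∧ (∀ x ∈ xs, ¬ t.Writes x) ∧ (∀ y, t.Leads y → y ∈ xs)
    | .fort x ps => ps.WF ∧ ¬ ps.Writes x
    | .roft x ps => ps.WF ∧ ¬ ps.Writes x
  def Bodies.WF : Bodies → Prop
    | .single t => t.WF
    | .cons t ps => t.WF ∧ ps.WF
end

/-- A raw term is in ForNo if it satisfies the read-only constraints. -/
def InForNo (t : Term) : Prop := t.Raw ∧ t.WF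

/-- `iterSeq t k` is the `k`-fold sequential composition `t;…;t` (`SKIP` for `k = 0`). -/
def iterSeq (t : Term) : ℕ → Term
  | 0 => .skip
  | 1 => t
  | n + 2 => .seq t (iterSeq t (n + 1))

/-- `mkBodiesAux g i k` is the list of bodies `g i, g (i+1), …, g (i+k)`. -/
def mkBodiesAux (g : ℕ → Term) : ℕ → ℕ → Bodies
  | i, 0 => .single (g i)
  | i, k + 1 => .cons (g i) (mkBodiesAux g (i + 1) k)

/-- `mkBodies g k` is the list of bodies `g 0, g 1, …, g k`. -/
def mkBodies (g : ℕ → Term) (k : ℕ) : Bodies := mkBodiesAux g 0 k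

/-- `COPY(x,y)` with bodies `PUSH[0] y, …, PUSH[k] y`. -/
def COPY (x y : Reg) (k : ℕ) : Term :=
  .normal [x] (.roft x (mkBodies (fun i => .push i y) k))

/-- `n` nested `FOR rgt` iterations around `PUSH[1] p`. -/
def powNest (rgt p : Reg) : ℕ → Term
  | 0 => .push 1 p
  | n + 1 => .fort rgt (.single (powNest rgt p n))

/-- The term `POW^n`. -/
def POW (rgt p : Reg) (n : ℕ) : Term := .normal [rgt] (powNest rgt p n)

/-- The term `REMOVE-BLANKS` for tape alphabet codes `{0,…,n−1}` and
input alphabet codes `{0,…,m−1}`. -/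
def REMOVEBLANKS (rgt g1 : Reg) (n m : ℕ) : Term :=
  .seq (.normal [rgt] (.roft rgt (mkBodies (fun i => .push i g1) (n - 1))))
       (.normal [g1]
         (.seq (.fort g1 (mkBodies (fun i => .pop i rgt) (n - 1)))
               (.roft g1 (mkBodies (fun i => if i < m then .push i rgt else .skip) m))))

mutual
  /-- Big-step semantics instrumented with the number of rule applications
  in the derivation. -/
  inductive EvalN : ℕ → Term → FState → FState → Prop where
    | skip : ∀ ω, EvalN 1 .skip ω ω
    | seq : ∀ {k l : ℕ} {t u : Term} {ω ω' ω'' : FState},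
        EvalN k t ω ω' → EvalN l u ω' ω'' → EvalN (k + l + 1) (.seq t u) ω ω''
    | push : ∀ (n : ℕ) (x : Reg) (φ : Store) (c : ℕ),
        EvalN 1 (.push n x) (φ, c) (upd φ x (pushOp n (φ x, c)).1, (pushOp n (φ x, c)).2)
    | pop : ∀ (n : ℕ) (x : Reg) (φ : Store) (c : ℕ),
        EvalN 1 (.pop n x) (φ, c) (upd φ x (popOp n (φ x, c)).1, (popOp n (φ x, c)).2)
    | ifeq_true : ∀ {k x n t} {φ : Store} {c : ℕ} {ω' : FState},
        (φ x).head? = some n → EvalN k t (φ, c) ω' → EvalN (k + 1) (.ifeq x n t) (φ, c) ω'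
    | ifeq_false : ∀ {x n t} (φ : Store) (c : ℕ),
        (φ x).head? ≠ some n → EvalN 1 (.ifeq x n t) (φ, c) (φ, c)
    | normal : ∀ {k xs t ω ω'}, EvalN k t ω ω' → EvalN (k + 1) (.normal xs t) ω ω'
    | fort : ∀ {k x ps ω ω'}, EvalListN k (ω.1 x) ps ω ω' → EvalN (k + 1) (.fort x ps) ω ω'
    | roft : ∀ {k x ps ω ω'}, EvalListN k (ω.1 x).reverse ps ω ω' → EvalN (k + 1) (.roft x ps) ω ω'
  inductive EvalListN : ℕ → Stack → Bodies → FState → FState → Prop where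
    | nil : ∀ (ps : Bodies) (ω : FState), EvalListN 1 [] ps ω ω
    | cons : ∀ {k l : ℕ} {i : ℕ} {t : Stack} {ps : Bodies} {ω ω'' ω' : FState},
        EvalN k (ps.get i) ω ω'' → EvalListN l t ps ω'' ω' →
        EvalListN (k + l + 1) (i :: t) ps ω ω'
end

/-! ### Turing machines -/

/-- Deterministic one-tape Turing machines with a semi-infinite tape, input/output
alphabet `S` embedded in the tape alphabet `Γ`, and direction `Bool`
(`false` = left, `true` = right). -/
structure TM (S : Type) where
  Q : Type
  finQ : Fintype Q
  q0 : Q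
  qhalt : Q
  Γ : Type
  finΓ : Fintype Γ
  decΓ : DecidableEq Γ
  blank : Γ
  embed : S → Γ
  embed_inj : Function.Injective embed
  blank_notin : ∀ a, embed a ≠ blank
  δ : Q → Γ → Q × Γ × Bool

namespace TM

variable {S : Type}

/-- Configurations `(u, q, v)`: left tape part (nearest cell first), current state,
right tape part starting with the scanned cell (no trailing blanks). -/
abbrev Config (M : TM S) : Type := List M.Γ × M.Q × List M.Γ

/-- Remove the trailing blanks of a list. -/
def trim (M : TM S) (l : List M.Γ) : List M.Γ :=
  letI := M.decΓ
  (l.reverse.dropWhile (fun a => decide (a = M.blank))).reverse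

/-- The single-step transition function. -/
def stepFn (M : TM S) (c : M.Config) : M.Config :=
  let u := c.1
  let q := c.2.1
  let v := c.2.2
  let a := v.headD M.blank
  let r := M.δ q a
  if r.2.2 then (r.2.1 :: u, r.1, v.tail)
  else (u.tail, r.1, M.trim (u.headD M.blank :: r.2.1 :: v.tail))

/-- Single-step transition relation `c ⇝ c'`. -/
def Step (M : TM S) (c c' : M.Config) : Prop := c.2.1 ≠ M.qhalt ∧ c' = M.stepFn c

/-- `n`-step transition relation `c ⇝ⁿ c'`. -/
def Steps (M : TM S) : ℕ → M.Config → M.Config → Prop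
  | 0 => fun c c' => c = c'
  | n + 1 => fun c c'' => ∃ c', M.Step c c' ∧ M.Steps n c' c''

/-- The initial configuration on input `w`. -/
def init (M : TM S) (w : List S) : M.Config := ([], M.q0, w.map M.embed)

/-- `M` is a polynomial-time Turing machine. -/
def PTime (M : TM S) : Prop :=
  ∃ a b : ℕ, 0 < a ∧ 0 < b ∧ ∀ w : List S,
    ∃ k ≤ a * w.length ^ b, ∃ c : M.Config, M.Steps k (M.init w) c ∧ c.2.1 = M.qhalt

end TM

/-- `f` is computable in polynomial time. -/
def FPTime {S : Type} (f : List S → List S) : Prop :=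
  ∃ M : TM S, M.PTime ∧
    ∀ w : List S, ∃ k : ℕ, M.Steps k (M.init w) ([], M.qhalt, (f w).map M.embed)

/-- `f` is honest: the input length is polynomially bounded in the output length. -/
def Honest {S : Type} (f : List S → List S) : Prop :=
  ∃ q : Polynomial ℕ, ∀ x : List S, x.length ≤ q.eval (f x).length

/-! ### Encodings and computed functions -/

/-- An encoding of a finite alphabet `S`: a bijection onto `{0, …, |S| − 1}`. -/
structure Encoding (S : Type) [Fintype S] where
  enc : S → ℕ
  inj : Function.Injective enc
  lt : ∀ a, enc a < Fintype.card S

/-- Encoding of strings as stacks. -/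
def Encoding.encStr {S : Type} [Fintype S] (e : Encoding S) (w : List S) : Stack :=
  w.map e.enc

/-- `T` (with input register `rin` and output register `rout`) computes `f`. -/
def Computes {S : Type} [Fintype S] (e : Encoding S) (T : Term) (rin rout : Reg)
    (f : List S → List S) : Prop :=
  ∀ x : List S, ∃ φ : Store,
    Eval T (upd emptyStore rin (e.encStr x), 0) (φ, 0) ∧ φ rout = e.encStr (f x)

/-- `T` computes `f` with zero-garbage. -/
def ComputesZG {S : Type} [Fintype S] (e : Encoding S) (T : Term) (rin rout : Reg)
    (f : List S → List S) : Prop :=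
  ∀ x : List S, ∃ φ : Store,
    Eval T (upd emptyStore rin (e.encStr x), 0) (φ, 0) ∧ φ rout = e.encStr (f x) ∧
    ∀ y : Reg, y ≠ rout → φ y = []

/-! ### Simulation of Turing machines -/

/-- The register holding the left part of the tape. -/
def lftR : Reg := 0
/-- The register holding the current state. -/
def qR : Reg := 1
/-- The register holding the right part of the tape. -/
def rgtR : Reg := 2

/-- `σ` simulates configuration `c` (written `σ ≈ c`). -/
def Sim {S : Type} (M : TM S) (encΓ : M.Γ → ℕ) (encQ : M.Q → ℕ)
    (σ : FState) (c : M.Config) : Prop :=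
  σ.2 = 0 ∧
  σ.1 lftR = c.1.map encΓ ∧
  (σ.1 qR).head? = some (encQ c.2.1) ∧
  ∃ bs : Stack, (∀ b ∈ bs, b = encΓ M.blank) ∧ σ.1 rgtR = c.2.2.map encΓ ++ bs

/-- `σ` cleanly simulates configuration `c` (written `σ ≅ c`). -/
def SimClean {S : Type} (M : TM S) (encΓ : M.Γ → ℕ) (encQ : M.Q → ℕ)
    (σ : FState) (c : M.Config) : Prop :=
  σ.2 = 0 ∧
  σ.1 lftR = c.1.map encΓ ∧
  (σ.1 qR).head? = some (encQ c.2.1) ∧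
  σ.1 rgtR = c.2.2.map encΓ

/-- The hypotheses of the simulation setup: `encΓ` is a bijection of `Γ` onto
`{0,…,n−1}` giving non-input characters larger codes than input characters,
and `encQ` is an injective encoding of states. -/
def SimSetup {S : Type} (M : TM S) (encΓ : M.Γ → ℕ) (encQ : M.Q → ℕ) : Prop :=
  Function.Injective encΓ ∧
  (∀ a : M.Γ, encΓ a < @Fintype.card M.Γ M.finΓ) ∧
  (∀ a : M.Γ, (∀ s : S, M.embed s ≠ a) → ∀ s : S, encΓ (M.embed s) < encΓ a) ∧
  Function.Injective encQ

end ForNo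

/-! A pass of `simulate` first copies the heads of `lftR`, `qR` and `rgtR` to three fresh
registers (`0` marking an empty stack), and then runs a table with one `IF`-guarded row per
local view `(state, head of rgtR, head of lftR)`, that row performing the corresponding
transition. The rows write only `lftR`, `qR` and `rgtR` while their guards read the copies,
so exactly the row of the current view fires: one pass simulates one step, and a pass in a
halting state changes nothing that `Sim` sees. Blanks trailing on the right tape are
harmless, because a configuration padded with blanks steps to a padded successor. -/

namespace ForNo

section Semantics

@[simp] lemma upd_apply_self (φ : Store) (x : Reg) (s : Stack) : upd φ x s x = s := by
  simp [upd]

@[simp] lemma upd_apply_of_ne {φ : Store} {x y : Reg} (s : Stack) (h : y ≠ x) :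
    upd φ x s y = φ y := by
  simp [upd, h]

lemma upd_eq_self {φ : Store} {x : Reg} {s : Stack} (h : φ x = s) : upd φ x s = φ := by
  funext y
  by_cases hy : y = x <;> simp [upd, hy, h]

lemma eval_push (n : ℕ) (x : Reg) (φ : Store) :
    Eval (.push n x) (φ, 0) (upd φ x (n :: φ x), 0) :=
  Eval.push n x φ 0

lemma eval_pop {φ : Store} {x : Reg} {n : ℕ} {s : Stack} (h : φ x = n :: s) :
    Eval (.pop n x) (φ, 0) (upd φ x s, 0) := by
  simpa [popOp, h] using Eval.pop n x φ 0

lemma Bodies.writes_of_writes_get {x : Reg} :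
    ∀ {ps : Bodies} {i : ℕ}, (ps.get i).Writes x → ps.Writes x
  | .single _, _, h => h
  | .cons _ _, 0, h => Or.inl h
  | .cons _ ps, _ + 1, h => Or.inr (writes_of_writes_get (ps := ps) h)

mutual
lemma Eval.apply_of_not_writes {x : Reg} {t : Term} {ω ω' : FState} :
    Eval t ω ω' → ¬ t.Writes x → ω'.1 x = ω.1 x
  | .skip _, _ => rfl
  | .seq h₁ h₂, hx => by
    rw [h₂.apply_of_not_writes fun h => hx (Or.inr h),
      h₁.apply_of_not_writes fun h => hx (Or.inl h)]
  | .push _ _ _ _, hx => upd_apply_of_ne _ (Ne.symm hx)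
  | .pop _ _ _ _, hx => upd_apply_of_ne _ (Ne.symm hx)
  | .ifeq_true _ h, hx => h.apply_of_not_writes hx
  | .ifeq_false _ _ _, _ => rfl
  | .normal h, hx => h.apply_of_not_writes hx
  | .fort h, hx => h.apply_of_not_writes hx
  | .roft h, hx => h.apply_of_not_writes hx

lemma EvalList.apply_of_not_writes {x : Reg} {s : Stack} {ps : Bodies} {ω ω' : FState} :
    EvalList s ps ω ω' → ¬ ps.Writes x → ω'.1 x = ω.1 x
  | .nil _ _, _ => rfl
  | .cons h₁ h₂, hx => by
    rw [h₂.apply_of_not_writes hx,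
      h₁.apply_of_not_writes fun h => hx (Bodies.writes_of_writes_get h)]
end

def seqList : List Term → Term
  | [] => .skip
  | t :: l => .seq t (seqList l)

lemma eval_seqList_map_of_forall {ι : Type} {f : ι → Term} {L : List ι} {ω : FState}
    (h : ∀ i ∈ L, Eval (f i) ω ω) : Eval (seqList (L.map f)) ω ω := by
  induction L with
  | nil => exact .skip ω
  | cons i L ih =>
    exact .seq (h i List.mem_cons_self) (ih fun j hj => h j (List.mem_cons_of_mem _ hj))

lemma eval_seqList_map_of_unique {ι : Type} {f : ι → Term} {L : List ι} {i₀ : ι}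
    {ω ω' : FState} (hL : L.Nodup) (hi₀ : i₀ ∈ L) (hfire : Eval (f i₀) ω ω')
    (hskip : ∀ i ≠ i₀, Eval (f i) ω ω ∧ Eval (f i) ω' ω') :
    Eval (seqList (L.map f)) ω ω' := by
  induction L with
  | nil => cases hi₀
  | cons j L ih =>
    obtain ⟨hj, hL⟩ := List.nodup_cons.mp hL
    rcases List.mem_cons.mp hi₀ with rfl | hi₀
    · exact .seq hfire (eval_seqList_map_of_forall fun i hi =>
        (hskip i fun h => hj (h ▸ hi)).2)
    · exact .seq (hskip j fun h => hj (h ▸ hi₀)).1 (ih hL hi₀)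

lemma eval_iterSeq_succ {t : Term} {k : ℕ} {ω ω' ω'' : FState}
    (h₁ : Eval t ω ω') (h₂ : Eval (iterSeq t k) ω' ω'') :
    Eval (iterSeq t (k + 1)) ω ω'' := by
  cases k with
  | zero => cases h₂; exact h₁
  | succ k => exact .seq h₁ h₂

lemma exists_eval_iterSeq {α : Type} {t : Term} (R : FState → α → Prop) (f : α → α)
    (hstep : ∀ σ a, R σ a → ∃ τ, Eval t σ τ ∧ R τ (f a)) (k : ℕ) {σ : FState}
    {a : α} (hσ : R σ a) : ∃ τ, Eval (iterSeq t k) σ τ ∧ R τ (f^[k] a) := by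
  induction k generalizing σ a with
  | zero => exact ⟨σ, .skip σ, hσ⟩
  | succ k ih =>
    obtain ⟨σ₁, h₁, hσ₁⟩ := hstep σ a hσ
    obtain ⟨τ, h₂, hτ⟩ := ih hσ₁
    exact ⟨τ, eval_iterSeq_succ h₁ h₂, by rwa [Function.iterate_succ_apply]⟩

end Semantics

section Guards

def guarded : List (Reg × ℕ) → Term → Term
  | [], t => t
  | (x, n) :: gs, t => .ifeq x n (guarded gs t)

def Holds (φ : Store) (gs : List (Reg × ℕ)) : Prop := ∀ g ∈ gs, (φ g.1).head? = some g.2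

lemma holds_congr {φ φ' : Store} {gs : List (Reg × ℕ)} (h : ∀ g ∈ gs, φ' g.1 = φ g.1) :
    Holds φ' gs ↔ Holds φ gs := by
  refine forall₂_congr fun g hg => ?_
  rw [h g hg]

lemma eval_guarded_of_holds {gs : List (Reg × ℕ)} {t : Term} {φ : Store} {c : ℕ}
    {ω' : FState} (hgs : Holds φ gs) (ht : Eval t (φ, c) ω') :
    Eval (guarded gs t) (φ, c) ω' := by
  induction gs with
  | nil => exact ht
  | cons g gs ih =>
    exact .ifeq_true (hgs g List.mem_cons_self)
      (ih fun g' hg' => hgs g' (List.mem_cons_of_mem _ hg'))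

lemma eval_guarded_of_not_holds {gs : List (Reg × ℕ)} {t : Term} {φ : Store} {c : ℕ}
    (hgs : ¬ Holds φ gs) : Eval (guarded gs t) (φ, c) (φ, c) := by
  induction gs with
  | nil => exact absurd (fun _ h => absurd h List.not_mem_nil) hgs
  | cons g gs ih =>
    by_cases hg : (φ g.1).head? = some g.2
    · refine .ifeq_true hg (ih fun h => hgs ?_)
      rintro g' (_ | ⟨_, hg'⟩)
      exacts [hg, h g' hg']
    · exact .ifeq_false φ c hg

lemma writes_guarded {gs : List (Reg × ℕ)} {t : Term} {x : Reg} :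
    (guarded gs t).Writes x ↔ t.Writes x := by
  induction gs with
  | nil => rfl
  | cons g gs ih => exact ih

end Guards

section Table

variable {ι : Type} [Fintype ι]

noncomputable def table (gs : ι → List (Reg × ℕ)) (t : ι → Term) : Term :=
  seqList (Finset.univ.toList.map fun i => guarded (gs i) (t i))

lemma eval_table_of_unique {gs : ι → List (Reg × ℕ)} {t : ι → Term} {i₀ : ι}
    {φ φ' : Store} {c c' : ℕ} (h₀ : Holds φ (gs i₀))
    (hfire : Eval (t i₀) (φ, c) (φ', c'))
    (hother : ∀ i ≠ i₀, ¬ Holds φ (gs i) ∧ ¬ Holds φ' (gs i)) :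
    Eval (table gs t) (φ, c) (φ', c') :=
  eval_seqList_map_of_unique (Finset.nodup_toList _) (Finset.mem_toList.2 (Finset.mem_univ i₀))
    (eval_guarded_of_holds h₀ hfire)
    fun i hi => ⟨eval_guarded_of_not_holds (hother i hi).1,
      eval_guarded_of_not_holds (hother i hi).2⟩

lemma eval_table_of_forall_not_holds {gs : ι → List (Reg × ℕ)} {t : ι → Term} {φ : Store}
    {c : ℕ} (h : ∀ i, ¬ Holds φ (gs i)) : Eval (table gs t) (φ, c) (φ, c) :=
  eval_seqList_map_of_forall fun i _ => eval_guarded_of_not_holds (h i)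

end Table

section Probe

variable {α : Type}

def headCode (enc : α → ℕ) : Option α → ℕ
  | none => 0
  | some a => enc a + 1

lemma headCode_injective {enc : α → ℕ} (henc : Function.Injective enc) :
    Function.Injective (headCode enc) := by
  rintro (_ | a) (_ | b) h
  · rfl
  · simp [headCode] at h
  · simp [headCode] at h
  · simp only [headCode, add_left_inj] at h
    rw [henc h]

/-- `IF` cannot test a stack for emptiness: the `0` pushed first stays on top of `y` exactly
when no row fires. -/
noncomputable def probe [Fintype α] (x y : Reg) (enc : α → ℕ) : Term :=
  .seq (.push 0 y) (table (fun a => [(x, enc a)]) fun a => .push (enc a + 1) y)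

lemma exists_eval_probe [Fintype α] {x y : Reg} (hxy : x ≠ y) {enc : α → ℕ}
    (henc : Function.Injective enc) {φ : Store} {o : Option α}
    (hx : (φ x).head? = o.map enc) :
    ∃ ψ, Eval (probe x y enc) (φ, 0) (ψ, 0) ∧ (ψ y).head? = some (headCode enc o) ∧
      ∀ z ≠ y, ψ z = φ z := by
  have hx₁ : (upd φ y (0 :: φ y) x).head? = o.map enc := by rw [upd_apply_of_ne _ hxy, hx]
  cases o with
  | none =>
    refine ⟨_, .seq (eval_push 0 y φ) (eval_table_of_forall_not_holds fun a h => ?_),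
      by simp [headCode], fun z hz => upd_apply_of_ne _ hz⟩
    simp [Holds, hx₁] at h
  | some a₀ =>
    refine ⟨_, .seq (eval_push 0 y φ)
        (eval_table_of_unique (i₀ := a₀) ?_ (eval_push _ y _) ?_),
      by simp [headCode], fun z hz => by simp [hz]⟩
    · simpa [Holds] using hx₁
    · intro a ha
      simp only [Holds, List.mem_singleton, forall_eq, upd_apply_of_ne _ hxy, hx,
        Option.map_some, Option.some.injEq]
      exact ⟨fun h => ha (henc h).symm, fun h => ha (henc h).symm⟩

def popHead (enc : α → ℕ) (x : Reg) : Option α → Term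
  | none => .skip
  | some a => .pop (enc a) x

lemma eval_popHead {enc : α → ℕ} {x : Reg} {φ : Store} {l : List α}
    (h : φ x = l.map enc) :
    Eval (popHead enc x l.head?) (φ, 0) (upd φ x (l.tail.map enc), 0) := by
  cases l with
  | nil => rw [List.tail_nil, ← h, upd_eq_self rfl]; exact .skip _
  | cons a l => exact eval_pop h

end Probe

section Membership

lemma InForNo.seq {t u : Term} (ht : InForNo t) (hu : InForNo u) : InForNo (.seq t u) :=
  ⟨⟨ht.1, hu.1⟩, ⟨ht.2, hu.2⟩⟩

lemma inForNo_push (n : ℕ) (x : Reg) : InForNo (.push n x) := ⟨trivial, trivial⟩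

lemma inForNo_pop (n : ℕ) (x : Reg) : InForNo (.pop n x) := ⟨trivial, trivial⟩

lemma inForNo_skip : InForNo .skip := ⟨trivial, trivial⟩

lemma inForNo_seqList {l : List Term} (h : ∀ t ∈ l, InForNo t) : InForNo (seqList l) := by
  induction l with
  | nil => exact inForNo_skip
  | cons t l ih =>
    exact (h t List.mem_cons_self).seq (ih fun u hu => h u (List.mem_cons_of_mem _ hu))

lemma writes_seqList {l : List Term} {x : Reg} :
    (seqList l).Writes x ↔ ∃ t ∈ l, t.Writes x := by
  induction l with
  | nil => simp [seqList, Term.Writes]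
  | cons t l ih => simp [seqList, Term.Writes, ih]

lemma InForNo.guarded {gs : List (Reg × ℕ)} {t : Term} (ht : InForNo t)
    (hgs : ∀ g ∈ gs, ¬ t.Writes g.1) : InForNo (guarded gs t) := by
  induction gs with
  | nil => exact ht
  | cons g gs ih =>
    have ih' := ih fun g' hg' => hgs g' (List.mem_cons_of_mem _ hg')
    exact ⟨ih'.1, ih'.2, fun h => hgs g List.mem_cons_self (writes_guarded.1 h)⟩

lemma inForNo_table {ι : Type} [Fintype ι] {gs : ι → List (Reg × ℕ)} {t : ι → Term}
    (ht : ∀ i, InForNo (t i)) (hgs : ∀ i, ∀ g ∈ gs i, ¬ (t i).Writes g.1) :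
    InForNo (table gs t) :=
  inForNo_seqList fun _ hu => by
    obtain ⟨i, -, rfl⟩ := List.mem_map.1 hu
    exact (ht i).guarded (hgs i)

lemma inForNo_probe {α : Type} [Fintype α] {x y : Reg} (hxy : x ≠ y) (enc : α → ℕ) :
    InForNo (probe x y enc) :=
  (inForNo_push 0 y).seq (inForNo_table (fun _ => inForNo_push _ y)
    fun _ _ hg hw => by
      obtain rfl := List.mem_singleton.1 hg
      exact hxy hw.symm)

lemma inForNo_popHead {α : Type} (enc : α → ℕ) (x : Reg) (o : Option α) :
    InForNo (popHead enc x o) := by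
  cases o
  exacts [inForNo_skip, inForNo_pop _ x]

lemma writes_popHead {α : Type} {enc : α → ℕ} {x y : Reg} {o : Option α}
    (h : (popHead enc x o).Writes y) : y = x := by
  cases o
  exacts [h.elim, h.symm]

end Membership

namespace TM

variable {S : Type} (M : TM S)

open scoped Classical in
noncomputable def advance (c : M.Config) : M.Config := if c.2.1 = M.qhalt then c else M.stepFn c

def pad (j : ℕ) (c : M.Config) : M.Config := (c.1, c.2.1, c.2.2 ++ List.replicate j M.blank)

variable {M}

lemma advance_iterate_of_steps {p k : ℕ} {c c' : M.Config} (hsteps : M.Steps p c c')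
    (hhalt : c'.2.1 = M.qhalt) (hpk : p ≤ k) : M.advance^[k] c = c' := by
  induction p generalizing c k with
  | zero =>
    obtain rfl : c = c' := hsteps
    exact Function.iterate_fixed (by rw [advance, if_pos hhalt]) k
  | succ p ih =>
    obtain ⟨c₁, ⟨hc, rfl⟩, hsteps⟩ := hsteps
    obtain ⟨k, rfl⟩ : ∃ k', k = k' + 1 := ⟨k - 1, by omega⟩
    rw [Function.iterate_succ_apply, advance, if_neg hc]
    exact ih hsteps (by omega)

lemma trim_append_replicate (l : List M.Γ) (j : ℕ) :
    M.trim (l ++ List.replicate j M.blank) = M.trim l := by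
  simp [trim, List.dropWhile_append_of_pos]

lemma exists_trim_append_replicate (l : List M.Γ) :
    ∃ k, M.trim l ++ List.replicate k M.blank = l := by
  let := M.decΓ
  refine ⟨(l.reverse.takeWhile fun a => decide (a = M.blank)).length, ?_⟩
  have hblank : l.reverse.takeWhile (fun a => decide (a = M.blank)) =
      List.replicate (l.reverse.takeWhile fun a => decide (a = M.blank)).length M.blank :=
    List.eq_replicate_length.2 fun b hb => by simpa using List.mem_takeWhile_imp hb
  conv_rhs => rw [← l.reverse_reverse, ← List.takeWhile_append_dropWhile
    (p := fun a => decide (a = M.blank)) (l := l.reverse), List.reverse_append, hblank,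
    List.reverse_replicate]
  rfl

lemma exists_tail_append_replicate (v : List M.Γ) (j : ℕ) :
    ∃ j', (v ++ List.replicate j M.blank).tail = v.tail ++ List.replicate j' M.blank := by
  cases v with
  | nil => exact ⟨j - 1, by simp⟩
  | cons a v => exact ⟨j, rfl⟩

lemma exists_advance_pad (j : ℕ) (c : M.Config) :
    ∃ j', M.advance (M.pad j c) = M.pad j' (M.advance c) := by
  obtain ⟨u, q, v⟩ := c
  by_cases hq : q = M.qhalt
  · exact ⟨j, by simp [advance, pad, hq]⟩
  have hread : (v ++ List.replicate j M.blank).headD M.blank = v.headD M.blank := by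
    cases v <;> cases j <;> rfl
  obtain ⟨j', hj'⟩ := exists_tail_append_replicate v j
  simp only [advance, pad, hq, if_false, stepFn, hread, hj']
  split
  · exact ⟨j', rfl⟩
  · refine ⟨0, ?_⟩
    rw [List.replicate_zero, List.append_nil, ← List.cons_append, ← List.cons_append,
      trim_append_replicate]

end TM

section Simulation

variable {S : Type} {M : TM S} {encΓ : M.Γ → ℕ} {encQ : M.Q → ℕ} {σ : FState}

lemma SimClean.sim {c : M.Config} (h : SimClean M encΓ encQ σ c) : Sim M encΓ encQ σ c :=
  ⟨h.1, h.2.1, h.2.2.1, [], by simp, by simpa using h.2.2.2⟩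

lemma Sim.of_pad {j : ℕ} {c : M.Config} (h : Sim M encΓ encQ σ (M.pad j c)) :
    Sim M encΓ encQ σ c := by
  obtain ⟨h₀, hl, hq, bs, hbs, hr⟩ := h
  refine ⟨h₀, hl, hq, (List.replicate j M.blank).map encΓ ++ bs, ?_,
    by simpa [TM.pad] using hr⟩
  simp only [List.mem_append, List.map_replicate, List.mem_replicate]
  rintro b (⟨-, rfl⟩ | hb)
  exacts [rfl, hbs b hb]

lemma Sim.exists_simClean_pad {c : M.Config} (h : Sim M encΓ encQ σ c) :
    ∃ j, SimClean M encΓ encQ σ (M.pad j c) := by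
  obtain ⟨h₀, hl, hq, bs, hbs, hr⟩ := h
  refine ⟨bs.length, h₀, hl, hq, ?_⟩
  rw [hr, List.eq_replicate_iff.2 ⟨rfl, hbs⟩]
  simp [TM.pad]

lemma SimClean.sim_trim {u l : List M.Γ} {q : M.Q}
    (h : SimClean M encΓ encQ σ (u, q, l)) : Sim M encΓ encQ σ (u, q, M.trim l) := by
  obtain ⟨k, hk⟩ := TM.exists_trim_append_replicate l
  rw [← hk] at h
  exact Sim.of_pad (j := k) h.sim

end Simulation

section Simulator

attribute [local instance] TM.finQ TM.finΓ

variable {S : Type} (M : TM S) (encΓ : M.Γ → ℕ) (encQ : M.Q → ℕ)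

def lftHeadR : Reg := 3
def qHeadR : Reg := 4
def rgtHeadR : Reg := 5

def guards : M.Q × Option M.Γ × Option M.Γ → List (Reg × ℕ)
  | (q, r, l) =>
    [(qHeadR, headCode encQ (some q)), (rgtHeadR, headCode encΓ r), (lftHeadR, headCode encΓ l)]

open scoped Classical in
noncomputable def transition : M.Q × Option M.Γ × Option M.Γ → Term
  | (q, r, l) =>
    if q = M.qhalt then .skip else
      match M.δ q (r.getD M.blank) with
      | (q', a', true) =>
        seqList [popHead encΓ rgtR r, .push (encΓ a') lftR, .push (encQ q') qR]
      | (q', a', false) =>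
        -- as in `stepFn`, a left move on an empty left tape prepends a blank to the right part
        seqList [popHead encΓ lftR l, popHead encΓ rgtR r, .push (encΓ a') rgtR,
          .push (encΓ (l.getD M.blank)) rgtR, .push (encQ q') qR]

noncomputable def readHeads : Term :=
  .seq (probe lftR lftHeadR encΓ) (.seq (probe qR qHeadR encQ) (probe rgtR rgtHeadR encΓ))

noncomputable def simulate : Term :=
  .seq (readHeads M encΓ encQ) (table (guards M encΓ encQ) (transition M encΓ encQ))

variable {M encΓ encQ}

lemma writes_transition {k : M.Q × Option M.Γ × Option M.Γ} {x : Reg}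
    (h : (transition M encΓ encQ k).Writes x) : x = lftR ∨ x = qR ∨ x = rgtR := by
  obtain ⟨q, r, l⟩ := k
  simp only [transition] at h
  split_ifs at h
  · exact h.elim
  split at h <;> obtain ⟨t, ht, hx⟩ := writes_seqList.1 h <;>
    simp only [List.mem_cons, List.not_mem_nil, or_false] at ht <;>
    rcases ht with rfl | rfl | rfl | rfl | rfl <;>
    first
    | simp [writes_popHead hx]
    | simp [Term.Writes] at hx; simp [hx]

lemma not_writes_transition {k i : M.Q × Option M.Γ × Option M.Γ} :
    ∀ g ∈ guards M encΓ encQ i, ¬ (transition M encΓ encQ k).Writes g.1 := by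
  intro g hg hw
  obtain ⟨q, r, l⟩ := i
  simp only [guards, List.mem_cons, List.not_mem_nil, or_false] at hg
  rcases hg with rfl | rfl | rfl <;> rcases writes_transition hw with h | h | h <;>
    simp [lftR, qR, rgtR, lftHeadR, qHeadR, rgtHeadR] at h

lemma inForNo_transition (k : M.Q × Option M.Γ × Option M.Γ) :
    InForNo (transition M encΓ encQ k) := by
  obtain ⟨q, r, l⟩ := k
  simp only [transition]
  split_ifs
  · exact inForNo_skip
  split <;> refine inForNo_seqList fun t ht => ?_ <;>
    simp only [List.mem_cons, List.not_mem_nil, or_false] at ht <;>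
    rcases ht with rfl | rfl | rfl | rfl | rfl <;>
    first | exact inForNo_popHead _ _ _ | exact inForNo_push _ _

lemma inForNo_simulate : InForNo (simulate M encΓ encQ) :=
  ((inForNo_probe (by decide) _).seq ((inForNo_probe (by decide) _).seq
    (inForNo_probe (by decide) _))).seq
    (inForNo_table inForNo_transition fun _ => not_writes_transition)

lemma eq_of_holds_guards (hΓ : Function.Injective encΓ) (hQ : Function.Injective encQ)
    {φ : Store} {k k' : M.Q × Option M.Γ × Option M.Γ}
    (h : Holds φ (guards M encΓ encQ k)) (h' : Holds φ (guards M encΓ encQ k')) : k = k' := by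
  obtain ⟨q, r, l⟩ := k
  obtain ⟨q', r', l'⟩ := k'
  have head_eq : ∀ {x : Reg} {n n' : ℕ},
      (φ x).head? = some n → (φ x).head? = some n' → n = n' :=
    fun h h' => Option.some.inj (h.symm.trans h')
  simp only [Holds, guards, List.mem_cons, List.not_mem_nil, or_false, forall_eq_or_imp,
    forall_eq] at h h'
  obtain ⟨hq, hr, hl⟩ := h
  obtain ⟨hq', hr', hl'⟩ := h'
  rw [Option.some.inj (headCode_injective hQ (head_eq hq hq')),
    headCode_injective hΓ (head_eq hr hr'), headCode_injective hΓ (head_eq hl hl')]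

lemma exists_eval_readHeads (hΓ : Function.Injective encΓ) (hQ : Function.Injective encQ)
    {φ : Store} {u w : List M.Γ} {q : M.Q} (h : SimClean M encΓ encQ (φ, 0) (u, q, w)) :
    ∃ ψ, Eval (readHeads M encΓ encQ) (φ, 0) (ψ, 0) ∧
      SimClean M encΓ encQ (ψ, 0) (u, q, w) ∧
      Holds ψ (guards M encΓ encQ (q, w.head?, u.head?)) := by
  obtain ⟨-, hl, hq, hr⟩ := h
  dsimp only at hl hq hr
  obtain ⟨ψ₁, e₁, h₁, f₁⟩ :=
    exists_eval_probe (φ := φ) (x := lftR) (y := lftHeadR) (by decide) hΓ (o := u.head?)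
      (by rw [hl, List.head?_map])
  obtain ⟨ψ₂, e₂, h₂, f₂⟩ :=
    exists_eval_probe (φ := ψ₁) (x := qR) (y := qHeadR) (by decide) hQ (o := some q)
      (by rw [f₁ qR (by decide)]; exact hq)
  obtain ⟨ψ₃, e₃, h₃, f₃⟩ :=
    exists_eval_probe (φ := ψ₂) (x := rgtR) (y := rgtHeadR) (by decide) hΓ (o := w.head?)
      (by rw [f₂ rgtR (by decide), f₁ rgtR (by decide), hr, List.head?_map])
  have keep : ∀ z ∉ [lftHeadR, qHeadR, rgtHeadR], ψ₃ z = φ z := fun z hz => by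
    simp only [List.mem_cons, List.not_mem_nil, or_false, not_or] at hz
    exact (f₃ z hz.2.2).trans ((f₂ z hz.2.1).trans (f₁ z hz.1))
  refine ⟨ψ₃, .seq e₁ (.seq e₂ e₃), ⟨rfl, ?_, ?_, ?_⟩, ?_⟩
  · exact (keep lftR (by decide)).trans hl
  · exact (congrArg List.head? (keep qR (by decide))).trans hq
  · exact (keep rgtR (by decide)).trans hr
  · simp only [Holds, guards, List.mem_cons, List.not_mem_nil, or_false, forall_eq_or_imp,
      forall_eq]
    rw [f₃ qHeadR (by decide), f₃ lftHeadR (by decide), f₂ lftHeadR (by decide)]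
    exact ⟨h₂, h₃, h₁⟩

lemma exists_eval_transition {ψ : Store} {u w : List M.Γ} {q : M.Q}
    (h : SimClean M encΓ encQ (ψ, 0) (u, q, w)) :
    ∃ τ, Eval (transition M encΓ encQ (q, w.head?, u.head?)) (ψ, 0) (τ, 0) ∧
      Sim M encΓ encQ (τ, 0) (M.advance (u, q, w)) := by
  by_cases hhalt : q = M.qhalt
  · refine ⟨ψ, ?_, ?_⟩
    · simp only [transition, if_pos hhalt]
      exact .skip _
    · rw [TM.advance, if_pos hhalt]
      exact h.sim
  obtain ⟨-, hl, hq, hr⟩ := h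
  dsimp only at hl hq hr
  have hr₁ : upd ψ lftR (u.tail.map encΓ) rgtR = w.map encΓ := by
    rw [upd_apply_of_ne _ (by decide), hr]
  rw [TM.advance, if_neg hhalt]
  rcases hδ : M.δ q (w.head?.getD M.blank) with ⟨q', a', _ | _⟩
  · refine ⟨_, by
      simp only [transition, if_neg hhalt, hδ]
      exact .seq (eval_popHead hl) (.seq (eval_popHead hr₁) (.seq (eval_push _ _ _)
        (.seq (eval_push _ _ _) (.seq (eval_push _ _ _) (.skip _))))), ?_⟩
    simp only [TM.stepFn, List.headD_eq_head?_getD, hδ]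
    refine SimClean.sim_trim ⟨rfl, ?_, ?_, ?_⟩ <;> simp [upd, lftR, qR, rgtR]
  · refine ⟨_, by
      simp only [transition, if_neg hhalt, hδ]
      exact .seq (eval_popHead hr) (.seq (eval_push _ _ _) (.seq (eval_push _ _ _) (.skip _))),
      ?_⟩
    simp only [TM.stepFn, List.headD_eq_head?_getD, hδ]
    refine SimClean.sim ⟨rfl, ?_, ?_, ?_⟩ <;> simp [upd, lftR, qR, rgtR]
    exact hl

lemma exists_eval_simulate (hΓ : Function.Injective encΓ) (hQ : Function.Injective encQ)
    {σ : FState} {c : M.Config} (hσ : Sim M encΓ encQ σ c) :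
    ∃ τ, Eval (simulate M encΓ encQ) σ τ ∧ Sim M encΓ encQ τ (M.advance c) := by
  obtain ⟨j, hclean⟩ := hσ.exists_simClean_pad
  obtain ⟨φ, n⟩ := σ
  obtain rfl : n = 0 := hclean.1
  obtain ⟨ψ, hread, hψ, hholds⟩ := exists_eval_readHeads hΓ hQ hclean
  obtain ⟨τ, htrans, hτ⟩ := exists_eval_transition hψ
  have hunique : ∀ i ≠ _, ¬ Holds ψ (guards M encΓ encQ i) :=
    fun i hi h => hi (eq_of_holds_guards hΓ hQ h hholds)
  have hkeep : ∀ i, Holds τ (guards M encΓ encQ i) ↔ Holds ψ (guards M encΓ encQ i) :=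
    fun i => holds_congr fun g hg => htrans.apply_of_not_writes (not_writes_transition g hg)
  have hτ' : Sim M encΓ encQ (τ, 0) (M.advance (M.pad j c)) := hτ
  obtain ⟨j', hj'⟩ := TM.exists_advance_pad j c
  rw [hj'] at hτ'
  exact ⟨(τ, 0), .seq hread (eval_table_of_unique hholds htrans fun i hi =>
    ⟨hunique i hi, mt (hkeep i).1 (hunique i hi)⟩), hτ'.of_pad⟩

end Simulator

end ForNo

open ForNo in
/-- Iterated simulation: if `σ ≈ c` and `c ⇝ᵖ c_HALT` with
`c_HALT` halting, then for every `k ≥ p` the `k`-fold sequential composition of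
`SIMULATE` maps `σ` to a state simulating `c_HALT`. -/
theorem simulate_iterated {S : Type} [Fintype S] (M : TM S) (hM : M.PTime)
    (encΓ : M.Γ → ℕ) (encQ : M.Q → ℕ) (hsetup : SimSetup M encΓ encQ) :
    ∃ SIMULATE : Term, InForNo SIMULATE ∧
      ∀ (σ : FState) (c chalt : M.Config) (p : ℕ),
        Sim M encΓ encQ σ c → M.Steps p c chalt → chalt.2.1 = M.qhalt →
        ∀ k : ℕ, p ≤ k →
          ∃ τ : FState, Eval (iterSeq SIMULATE k) σ τ ∧ Sim M encΓ encQ τ chalt := by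
  obtain ⟨hΓ, -, -, hQ⟩ := hsetup
  refine ⟨simulate M encΓ encQ, inForNo_simulate, fun σ c chalt p hσ hsteps hhalt k hk => ?_⟩
  obtain ⟨τ, hτ, hsim⟩ :=
    exists_eval_iterSeq (Sim M encΓ encQ) M.advance (fun _ _ => exists_eval_simulate hΓ hQ) k hσ
  exact ⟨τ, hτ, TM.advance_iterate_of_steps hsteps hhalt hk ▸ hsim⟩
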